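/- If H is a block of a connected graph G and u, v are distinct vertices of H, then every edge-cut of G separating u and v contains an edge-cut of H separating u and v, and λ_H(u,v) = λ_G(u,v). -/

import Mathlib

open SimpleGraph

/-- `F` is an edge-cut of `G` separating `u` and `v`. -/
def CutsBetween {V : Type*} (G : SimpleGraph V) (u v : V) (F : Finset (Sym2 V)) : Prop :=
  ↑F ⊆ G.edgeSet ∧ ¬ (G.deleteEdges ↑F).Reachable u v

/-- `lam G u v` is the minimum number of edges in an edge-cut of `G` separating `u` and `v`. -/
noncomputable def lam {V : Type*} (G : SimpleGraph V) (u v : V) : ℕ :=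
  sInf {n | ∃ F : Finset (Sym2 V), CutsBetween G u v F ∧ F.card = n}

/-- `c` is a strong rainbow disconnection coloring of `G`: every pair of distinct vertices
admits a rainbow minimum edge-cut separating them. -/
def IsSRDColoring {V : Type*} (G : SimpleGraph V) (c : Sym2 V → ℕ) : Prop :=
  ∀ u v : V, u ≠ v → ∃ F : Finset (Sym2 V),
    CutsBetween G u v F ∧ F.card = lam G u v ∧ Set.InjOn c ↑F

/-- The strong rainbow disconnection number of `G`. -/
noncomputable def srd {V : Type*} (G : SimpleGraph V) : ℕ :=
  sInf {k | ∃ c : Sym2 V → ℕ, (∀ e ∈ G.edgeSet, c e < k) ∧ IsSRDColoring G c}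

/-- `B` is a block of `G`: a maximal connected subgraph without cut-vertices. -/
def IsBlock {V : Type*} (G : SimpleGraph V) (B : G.Subgraph) : Prop :=
  B.verts.Nonempty ∧ B.coe.Connected ∧
  (∀ v : B.verts, (B.coe.induce {w | w ≠ v}).Preconnected) ∧
  ∀ B' : G.Subgraph, B ≤ B' → B'.coe.Connected →
    (∀ v : B'.verts, (B'.coe.induce {w | w ≠ v}).Preconnected) → B = B'

/-- `H` is a cycle graph: connected and 2-regular. -/
def IsCycleGraph {W : Type*} (H : SimpleGraph W) : Prop :=
  H.Connected ∧ ∀ v : W, Nat.card (H.neighborSet v) = 2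

/-!
A path of `G` between two vertices of a block `H` lies in `H`: adding it to `H` keeps the
subgraph connected and free of cut vertices (a vertex of the path reaches one of its two ends
while avoiding any other given vertex, because a path does not revisit vertices), so by
maximality `H ⊔ path = H`. Hence an edge-cut of `H` separating `u` and `v` also separates them
in `G`; conversely the edges of `H` in an edge-cut of `G` form an edge-cut of `H`. The two
minima therefore agree.
-/

namespace SimpleGraph

variable {V : Type*} {G : SimpleGraph V}

lemma Walk.IsPath.notMem_support_takeUntil_or_dropUntil [DecidableEq V] {a b z t : V}
    {p : G.Walk a b} (hp : p.IsPath) (hz : z ∈ p.support) (htz : t ≠ z) :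
    t ∉ (p.takeUntil z hz).support ∨ t ∉ (p.dropUntil z hz).support := by
  by_contra! ⟨htake, hdrop⟩
  have hnd := hp.support_nodup
  rw [← p.take_spec hz, Walk.support_append] at hnd
  rw [← Walk.cons_tail_support, List.mem_cons] at hdrop
  exact hdrop.elim htz fun h => List.disjoint_of_nodup_append hnd htake h

lemma Walk.IsSubwalk.toSubgraph_le {a b c d : V} {p : G.Walk a b} {q : G.Walk c d}
    (h : p.IsSubwalk q) : p.toSubgraph ≤ q.toSubgraph := by
  obtain ⟨r₁, r₂, rfl⟩ := h
  simp only [Walk.toSubgraph_append]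
  exact le_sup_right.trans le_sup_left

namespace Subgraph

lemma reachable_of_toSubgraph_le {S : G.Subgraph} {a b : V} (p : G.Walk a b)
    (h : p.toSubgraph ≤ S) :
    S.coe.Reachable ⟨a, h.1 p.start_mem_verts_toSubgraph⟩ ⟨b, h.1 p.end_mem_verts_toSubgraph⟩ :=
  (p.toSubgraph_connected ⟨_, p.start_mem_verts_toSubgraph⟩
    ⟨_, p.end_mem_verts_toSubgraph⟩).map (inclusion h)

lemma toSubgraph_le_deleteVerts {B : G.Subgraph} {s : Set V} {a b : V} {p : G.Walk a b}
    (h : p.toSubgraph ≤ B) (hs : ∀ x ∈ p.support, x ∉ s) : p.toSubgraph ≤ B.deleteVerts s := by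
  refine ⟨fun x hx => ⟨h.1 hx, hs x (p.mem_verts_toSubgraph.1 hx)⟩, fun x y hxy => ?_⟩
  exact deleteVerts_adj.2 ⟨h.1 hxy.fst_mem, hs x (p.mem_support_of_adj_toSubgraph hxy),
    h.1 hxy.snd_mem, hs y (p.mem_support_of_adj_toSubgraph hxy.symm), h.2 hxy⟩

lemma toSubgraph_le_deleteEdges {B : G.Subgraph} {s : Set (Sym2 V)} {a b : V} {p : G.Walk a b}
    (h : p.toSubgraph ≤ B) (hs : ∀ e ∈ p.edges, e ∉ s) : p.toSubgraph ≤ B.deleteEdges s :=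
  ⟨h.1, fun _ _ hxy => ⟨h.2 hxy, hs _ (p.adj_toSubgraph_iff_mem_edges.1 hxy)⟩⟩

def induceNeIsoDeleteVerts (B : G.Subgraph) (t : B.verts) :
    B.coe.induce {w | w ≠ t} ≃g (B.deleteVerts {(t : V)}).coe where
  toFun w := ⟨w.1.1, w.1.2, fun h => w.2 (Subtype.ext h)⟩
  invFun x := ⟨⟨x.1, x.2.1⟩, fun h => x.2.2 (congrArg Subtype.val h)⟩
  left_inv _ := rfl
  right_inv _ := rfl
  map_rel_iff' {x y} := by
    have hx : (x.1 : V) ≠ t := fun h => x.2 (Subtype.ext h)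
    have hy : (y.1 : V) ≠ t := fun h => y.2 (Subtype.ext h)
    simp [hx, hy]

lemma preconnected_induce_ne_iff (B : G.Subgraph) (t : B.verts) :
    (B.coe.induce {w | w ≠ t}).Preconnected ↔ (B.deleteVerts {(t : V)}).Preconnected :=
  (induceNeIsoDeleteVerts B t).preconnected_iff.trans Subgraph.preconnected_iff.symm

lemma preconnected_deleteVerts_sup_toSubgraph [DecidableEq V] {H : G.Subgraph} {t a b : V}
    (hH : (H.deleteVerts {t}).Preconnected) (ha : a ∈ H.verts) (hb : b ∈ H.verts)
    {p : G.Walk a b} (hp : p.IsPath) : ((H ⊔ p.toSubgraph).deleteVerts {t}).Preconnected := by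
  set S := (H ⊔ p.toSubgraph).deleteVerts {t}
  have exists_reachable_mem_H :
      ∀ z : S.verts, ∃ w : S.verts, (w : V) ∈ H.verts ∧ S.coe.Reachable z w := by
    rintro ⟨z, hzB, hzt⟩
    rcases hzB with hzH | hzp
    · exact ⟨⟨z, Or.inl hzH, hzt⟩, hzH, .rfl⟩
    have hz := p.mem_verts_toSubgraph.1 hzp
    have hle : p.toSubgraph ≤ H ⊔ p.toSubgraph := le_sup_right
    rcases hp.notMem_support_takeUntil_or_dropUntil hz (Ne.symm hzt) with ht | ht
    · have hq : (p.takeUntil z hz).reverse.toSubgraph ≤ H ⊔ p.toSubgraph := by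
        rw [Walk.toSubgraph_reverse]; exact (p.isSubwalk_takeUntil hz).toSubgraph_le.trans hle
      refine ⟨⟨a, Or.inl ha, ?_⟩, ha, ?_⟩
      · exact fun h => ht (h ▸ (p.takeUntil z hz).start_mem_support)
      · exact reachable_of_toSubgraph_le _ (toSubgraph_le_deleteVerts hq
          fun x hx (hxt : x = t) => ht (hxt ▸ by simpa using hx))
    · refine ⟨⟨b, Or.inl hb, ?_⟩, hb, ?_⟩
      · exact fun h => ht (h ▸ (p.dropUntil z hz).end_mem_support)
      · exact reachable_of_toSubgraph_le _ (toSubgraph_le_deleteVerts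
          ((p.isSubwalk_dropUntil hz).toSubgraph_le.trans hle)
          fun x hx (hxt : x = t) => ht (hxt ▸ hx))
  have reachable_of_mem_H : ∀ x y : S.verts, (x : V) ∈ H.verts → (y : V) ∈ H.verts →
      S.coe.Reachable x y := fun x y hx hy =>
    (hH ⟨x, hx, x.2.2⟩ ⟨y, hy, y.2.2⟩).map (inclusion (deleteVerts_mono le_sup_left))
  rw [Subgraph.preconnected_iff]
  intro x y
  obtain ⟨x', hx', hxx'⟩ := exists_reachable_mem_H x
  obtain ⟨y', hy', hyy'⟩ := exists_reachable_mem_H y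
  exact hxx'.trans ((reachable_of_mem_H x' y' hx' hy').trans hyy'.symm)

end Subgraph

end SimpleGraph

section Cuts

variable {V : Type*} {G : SimpleGraph V}

lemma CutsBetween.exists_cutsBetween_subgraph [DecidableEq V] (H : G.Subgraph) {u v : H.verts}
    {F : Finset (Sym2 V)} (hF : CutsBetween G u v F) :
    ∃ F' : Finset (Sym2 H.verts), CutsBetween H.coe u v F' ∧
      F'.image (Sym2.map Subtype.val) ⊆ F := by
  classical
  let F' := (F.preimage (Sym2.map Subtype.val)
    (Sym2.map.injective Subtype.val_injective).injOn).filter (· ∈ H.coe.edgeSet)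
  refine ⟨F', ⟨fun e he => (Finset.mem_filter.1 he).2, fun huv => hF.2 ?_⟩, ?_⟩
  · refine huv.map ⟨Subtype.val, fun {x y} hxy => ?_⟩
    rw [deleteEdges_adj] at hxy ⊢
    exact ⟨H.adj_sub hxy.1, fun he =>
      hxy.2 (Finset.mem_filter.2 ⟨Finset.mem_preimage.2 he, hxy.1⟩)⟩
  · intro e he
    obtain ⟨e', he', rfl⟩ := Finset.mem_image.1 he
    exact Finset.mem_preimage.1 (Finset.mem_filter.1 he').1

namespace IsBlock

variable {H : G.Subgraph}

lemma preconnected_deleteVerts (hH : IsBlock G H) (t : V) : (H.deleteVerts {t}).Preconnected := by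
  by_cases ht : t ∈ H.verts
  · exact (Subgraph.preconnected_induce_ne_iff H ⟨t, ht⟩).1 (hH.2.2.1 ⟨t, ht⟩)
  · rw [← Subgraph.deleteVerts_inter_verts_left_eq, Set.inter_singleton_eq_empty.2 ht,
      Subgraph.deleteVerts_empty]
    exact Subgraph.preconnected_iff.2 hH.2.1.preconnected

lemma toSubgraph_le [DecidableEq V] (hH : IsBlock G H) {a b : V} (ha : a ∈ H.verts)
    (hb : b ∈ H.verts) {p : G.Walk a b} (hp : p.IsPath) : p.toSubgraph ≤ H := by
  have hconn : (H ⊔ p.toSubgraph).Connected :=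
    Subgraph.connected_sup ⟨hH.2.1.preconnected⟩ p.toSubgraph_connected.preconnected
      ⟨a, ha, p.start_mem_verts_toSubgraph⟩
  have hcut (t : (H ⊔ p.toSubgraph).verts) :
      ((H ⊔ p.toSubgraph).coe.induce {w | w ≠ t}).Preconnected :=
    (Subgraph.preconnected_induce_ne_iff _ t).2 <|
      Subgraph.preconnected_deleteVerts_sup_toSubgraph (hH.preconnected_deleteVerts t) ha hb hp
  rw [hH.2.2.2 _ le_sup_left hconn.coe hcut]
  exact le_sup_right

lemma cutsBetween_image [DecidableEq V] (hH : IsBlock G H) {u v : H.verts}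
    {F : Finset (Sym2 H.verts)} (hF : CutsBetween H.coe u v F) :
    CutsBetween G u v (F.image (Sym2.map Subtype.val)) := by
  refine ⟨fun e he => ?_, fun ⟨w⟩ => hF.2 ?_⟩
  · obtain ⟨e', he', rfl⟩ := Finset.mem_image.1 he
    exact H.hom.map_mem_edgeSet (hF.1 he')
  let p := w.bypass.mapLe (G.deleteEdges_le _)
  have hp : p.IsPath := w.bypass_isPath.mapLe _
  have hpH : p.toSubgraph ≤ H.deleteEdges ↑(F.image (Sym2.map Subtype.val)) := by
    refine Subgraph.toSubgraph_le_deleteEdges (hH.toSubgraph_le u.2 v.2 hp) fun e he => ?_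
    rw [Walk.edges_mapLe_eq_edges] at he
    have hw := w.bypass.edges_subset_edgeSet he
    rw [edgeSet_deleteEdges] at hw
    exact hw.2
  rw [Subgraph.deleteEdges_coe_eq, ← Finset.coe_image]
  exact Subgraph.reachable_of_toSubgraph_le p hpH

end IsBlock

end Cuts

theorem stmt17_general {V : Type*} [DecidableEq V] (G : SimpleGraph V)
    (H : G.Subgraph) (hH : IsBlock G H)
    (u v : H.verts) :
    (∀ F : Finset (Sym2 V), CutsBetween G ↑u ↑v F →
      ∃ F' : Finset (Sym2 H.verts), CutsBetween H.coe u v F' ∧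
        F'.image (Sym2.map (Subtype.val : H.verts → V)) ⊆ F) ∧
    lam H.coe u v = lam G ↑u ↑v := by
  have hval : Function.Injective (Sym2.map (Subtype.val : H.verts → V)) :=
    Sym2.map.injective Subtype.val_injective
  refine ⟨fun F hF => hF.exists_cutsBetween_subgraph H, ?_⟩
  apply csInf_eq_csInf_of_forall_exists_le
  · rintro _ ⟨F, hF, rfl⟩
    exact ⟨_, ⟨_, hH.cutsBetween_image hF, rfl⟩, (Finset.card_image_of_injective F hval).le⟩
  · rintro _ ⟨F, hF, rfl⟩
    obtain ⟨F', hF', hsub⟩ := hF.exists_cutsBetween_subgraph H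
    exact ⟨_, ⟨F', hF', rfl⟩, (Finset.card_image_of_injective F' hval).ge.trans
      (Finset.card_le_card hsub)⟩

theorem stmt17 {V : Type*} [Fintype V] [DecidableEq V] (G : SimpleGraph V)
    (hG : G.Connected) (H : G.Subgraph) (hH : IsBlock G H)
    (u v : H.verts) (huv : u ≠ v) :
    (∀ F : Finset (Sym2 V), CutsBetween G ↑u ↑v F →
      ∃ F' : Finset (Sym2 H.verts), CutsBetween H.coe u v F' ∧
        F'.image (Sym2.map (Subtype.val : H.verts → V)) ⊆ F) ∧
    lam H.coe u v = lam G ↑u ↑v :=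
  stmt17_general G H hH u v
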